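/- Let n ≥ 1 and let M be the (n+1)×(n+1) real matrix given by the product of elementary unipotents x_{i}(x_i^k) along the standard reduced word w₀ = (s_n⋯s_1)(s_n⋯s_2)⋯(s_n) of type A_n, where in the block (s_n⋯s_j) the letter s_i (for i ≥ j) carries the Lusztig coordinate x_i^{i−j+1}. Then for all i ≥ 1, j ≥ 1 with i + j ≤ n + 1, the initial minor satisfies the product formula X_{i,i+j} = ∏_{m=1}^{j} ∏_{k=1}^{i} x_{m+k−1}^{k}. -/

import Mathlib

open Matrix
open Fin.NatCast

/-- `x_i(a) = 1 + a·E_{i,i+1}` in the (n+1)×(n+1) real matrices, with 0-based letter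
index `i : ℕ`; natural numbers are cast to `Fin (n+1)`. -/
noncomputable def xA (n : ℕ) (i : ℕ) (a : ℝ) : Matrix (Fin (n + 1)) (Fin (n + 1)) ℝ :=
  1 + Matrix.single (i : Fin (n + 1)) ((i + 1 : ℕ) : Fin (n + 1)) a

/-- The standard reduced word `w₀ = (s_n⋯s_1)(s_n⋯s_2)⋯(s_n)` of type `Aₙ`, decorated
with Lusztig coordinate labels: each entry is a pair `(i, k)` (with `i, k` 1-based)
meaning the letter `s_i` carrying the coordinate `x_i^k`; in the block `(s_n⋯s_j)`
the letter `s_i` (for `i ≥ j`) carries `x_i^{i-j+1}`, which is its `k`-th occurrence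
counted from the right. -/
def luszWord (n : ℕ) : List (ℕ × ℕ) :=
  (List.range n).flatMap fun j => (List.range (n - j)).map fun t => (n - t, n - t - j)

/-- The matrix `M`: the product of the `x_i(x_i^k)` along the standard reduced word,
where `v i k` denotes the Lusztig coordinate `x_i^k` (1-based indices). -/
noncomputable def MA (n : ℕ) (v : ℕ → ℕ → ℝ) : Matrix (Fin (n + 1)) (Fin (n + 1)) ℝ :=
  ((luszWord n).map fun p => xA n (p.1 - 1) (v p.1 p.2)).prod

/-- The initial minor `X_{a,b}`: the determinant of the square submatrix of `M` with
rows `1,…,a` and columns `b−a+1,…,b` (1-based; lower-right entry at `(a,b)`).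
For `a = 0` this is the empty determinant, which is `1`. -/
noncomputable def initialMinor (n : ℕ) (M : Matrix (Fin (n + 1)) (Fin (n + 1)) ℝ)
    (a b : ℕ) : ℝ :=
  Matrix.det (Matrix.of fun r c : Fin a =>
    M ((r : ℕ) : Fin (n + 1)) ((b - a + (c : ℕ) : ℕ) : Fin (n + 1)))

/-!
Peel off the first block `s_n⋯s_1` of the reduced word. Its letters come in decreasing order,
so the product of its factors is `1 + ∑ₜ x_t^t E_{t,t+1}` with no cross terms. The rest of the
word is the reduced word of `A_{n-1}` with every letter shifted by one, so its matrix is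
`1 ⊕ M'`, where `M'` is the matrix of `A_{n-1}` for the coordinates `(a, k) ↦ x_{a+1}^k`.
On the first `i` rows and the columns from `2` on, left multiplication by the bidiagonal factor
acts as a lower bidiagonal `i × i` matrix with diagonal `x_1^1, …, x_i^i`, whence
`X_{i,i+j+1}(M) = x_1^1 ⋯ x_i^i · X_{i,i+j}(M')`. Induction on `j` ends at `X_{i,i} = 1`, since
`M` is upper unitriangular.
-/

open Finset

theorem Fin.natCast_add_one_eq_succ {n c : ℕ} (h : c ≤ n) :
    ((c + 1 : ℕ) : Fin (n + 2)) = (c : Fin (n + 1)).succ := by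
  ext
  rw [Fin.val_succ, Fin.val_cast_of_lt (by omega), Fin.val_cast_of_lt (by omega)]

namespace Matrix

section Unitriangular

variable {ι R : Type*} [Fintype ι] [LinearOrder ι] [Semiring R]

theorem IsUpperTriangular.mul_apply_self {M N : Matrix ι ι R} (hM : M.IsUpperTriangular)
    (hN : N.IsUpperTriangular) (i : ι) : (M * N) i i = M i i * N i i := by
  rw [mul_apply, Finset.sum_eq_single i]
  · intro s _ hs
    rcases lt_or_gt_of_ne hs with h | h
    · rw [hM h, zero_mul]
    · rw [hN h, mul_zero]
  · simp

variable (ι R) in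
def upperUnitriangular [DecidableEq ι] : Submonoid (Matrix ι ι R) where
  carrier := {M | M.IsUpperTriangular ∧ ∀ i, M i i = 1}
  mul_mem' := fun ⟨hM, hM'⟩ ⟨hN, hN'⟩ =>
    ⟨hM.mul hN, fun i => by rw [hM.mul_apply_self hN, hM', hN', one_mul]⟩
  one_mem' := ⟨blockTriangular_one, fun _ => one_apply_eq _⟩

end Unitriangular

variable {R : Type*}

section CornerEmbed

variable [Semiring R] {n : ℕ}

variable (R n) in
def cornerEmbed :
    Matrix (Fin (n + 1)) (Fin (n + 1)) R →* Matrix (Fin (n + 2)) (Fin (n + 2)) R where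
  toFun A := of (Fin.cons (Fin.cons 1 0) fun r => Fin.cons 0 (A r))
  map_one' := by
    ext r c
    refine Fin.cases ?_ (fun r => ?_) r <;> refine Fin.cases ?_ (fun c => ?_) c <;>
      simp [one_apply, Fin.succ_ne_zero, eq_comm (a := (0 : Fin (n + 2)))]
  map_mul' A B := by
    ext r c
    rw [mul_apply, Fin.sum_univ_succ]
    refine Fin.cases ?_ (fun r => ?_) r <;> refine Fin.cases ?_ (fun c => ?_) c <;>
      simp [mul_apply]

@[simp] theorem cornerEmbed_zero_zero (A : Matrix (Fin (n + 1)) (Fin (n + 1)) R) :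
    cornerEmbed R n A 0 0 = 1 := rfl

@[simp] theorem cornerEmbed_zero_succ (A : Matrix (Fin (n + 1)) (Fin (n + 1)) R) (c : Fin (n + 1)) :
    cornerEmbed R n A 0 c.succ = 0 := rfl

@[simp] theorem cornerEmbed_succ_zero (A : Matrix (Fin (n + 1)) (Fin (n + 1)) R) (r : Fin (n + 1)) :
    cornerEmbed R n A r.succ 0 = 0 := rfl

@[simp] theorem cornerEmbed_succ_succ (A : Matrix (Fin (n + 1)) (Fin (n + 1)) R)
    (r c : Fin (n + 1)) :
    cornerEmbed R n A r.succ c.succ = A r c := rfl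

theorem cornerEmbed_one_add_single (I J : Fin (n + 1)) (a : R) :
    cornerEmbed R n (1 + single I J a) = 1 + single I.succ J.succ a := by
  ext r c
  refine Fin.cases ?_ (fun r => ?_) r <;> refine Fin.cases ?_ (fun c => ?_) c <;>
    simp [one_apply, single_apply, Fin.succ_ne_zero, eq_comm (a := (0 : Fin (n + 2)))]

theorem cornerEmbed_natCast_succ (A : Matrix (Fin (n + 1)) (Fin (n + 1)) R) {r : ℕ}
    (hr : r ≤ n + 1) (c : Fin (n + 1)) :
    cornerEmbed R n A r c.succ = if r = 0 then 0 else A ((r - 1 : ℕ) : Fin (n + 1)) c := by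
  cases r with
  | zero => simp
  | succ r => rw [Fin.natCast_add_one_eq_succ (by omega)]; simp

end CornerEmbed

section Bidiagonal

def lowerBidiagonal [Zero R] [One R] (a : ℕ → R) (i : ℕ) : Matrix (Fin i) (Fin i) R :=
  of fun r u => if u = r then a r else if (u : ℕ) + 1 = r then 1 else 0

theorem det_lowerBidiagonal [CommRing R] (a : ℕ → R) (i : ℕ) :
    (lowerBidiagonal a i).det = ∏ r ∈ range i, a r := by
  rw [det_of_isLowerTriangular, ← Fin.prod_univ_eq_prod_range]
  · simp [lowerBidiagonal]
  · intro r u (h : r < u)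
    have : (u : ℕ) + 1 ≠ r := by omega
    simp [lowerBidiagonal, h.ne', this]

theorem sum_lowerBidiagonal_mul [Semiring R] (a f : ℕ → R) {i : ℕ} (r : Fin i) :
    ∑ u, lowerBidiagonal a i r u * f u = a r * f r + if (r : ℕ) = 0 then 0 else f (r - 1) := by
  obtain ⟨_ | r, hr⟩ := r
  · rw [Fintype.sum_eq_single ⟨0, hr⟩]
    · simp [lowerBidiagonal]
    · intro u hu
      have : (u : ℕ) ≠ 0 := fun h => hu (Fin.ext h)
      simp [lowerBidiagonal, hu, this]
  · rw [Fintype.sum_eq_add ⟨r + 1, hr⟩ ⟨r, by omega⟩ (by simp [Fin.ext_iff])]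
    · simp [lowerBidiagonal]
    · rintro u ⟨hu, hu'⟩
      have : (u : ℕ) ≠ r := fun h => hu' (Fin.ext h)
      simp [lowerBidiagonal, hu, this]

variable (n : ℕ) in
def upperBidiagonal [Semiring R] (a : ℕ → R) : Matrix (Fin (n + 2)) (Fin (n + 2)) R :=
  1 + ∑ t ∈ range (n + 1), single (t : Fin (n + 2)) ((t + 1 : ℕ) : Fin (n + 2)) (a t)

theorem upperBidiagonal_mul_apply [Semiring R] {n : ℕ} (a : ℕ → R)
    (M : Matrix (Fin (n + 2)) (Fin (n + 2)) R) {r : ℕ} (hr : r ≤ n) (c : Fin (n + 2)) :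
    (upperBidiagonal n a * M) r c = M r c + a r * M ((r + 1 : ℕ) : Fin (n + 2)) c := by
  rw [upperBidiagonal, add_mul, one_mul, Finset.sum_mul, add_apply, Matrix.sum_apply,
    Finset.sum_eq_single r]
  · simp
  · intro t ht htr
    apply single_mul_apply_of_ne
    rw [mem_range] at ht
    rw [Ne, Fin.ext_iff, Fin.val_cast_of_lt (by omega), Fin.val_cast_of_lt (by omega)]
    omega
  · rw [mem_range]
    omega

end Bidiagonal

end Matrix

theorem xA_mem_upperUnitriangular {n i : ℕ} (h : i + 1 ≤ n) (a : ℝ) :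
    xA n i a ∈ upperUnitriangular (Fin (n + 1)) ℝ := by
  have hlt : (i : Fin (n + 1)) < ((i + 1 : ℕ) : Fin (n + 1)) := by
    rw [Fin.lt_def, Fin.val_cast_of_lt (by omega), Fin.val_cast_of_lt (by omega)]
    omega
  refine ⟨blockTriangular_one.add (blockTriangular_single (b := id) hlt.le a), fun r => ?_⟩
  rw [xA, Matrix.add_apply, one_apply_eq,
    single_apply_of_ne _ _ _ _ _ fun h => hlt.ne (h.1.trans h.2.symm), add_zero]

theorem cornerEmbed_xA {n i : ℕ} (h : i + 1 ≤ n) (a : ℝ) :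
    cornerEmbed ℝ n (xA n i a) = xA (n + 1) (i + 1) a := by
  rw [xA, cornerEmbed_one_add_single, xA, ← Fin.natCast_add_one_eq_succ (by omega),
    ← Fin.natCast_add_one_eq_succ h]

theorem fst_mem_Icc_of_mem_luszWord {n : ℕ} {p : ℕ × ℕ} (hp : p ∈ luszWord n) :
    p.1 ∈ Icc 1 n := by
  simp only [luszWord, List.mem_flatMap, List.mem_map, List.mem_range] at hp
  rw [mem_Icc]
  obtain ⟨j, hj, t, ht, rfl⟩ := hp
  omega

theorem MA_mem_upperUnitriangular (n : ℕ) (v : ℕ → ℕ → ℝ) :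
    MA n v ∈ upperUnitriangular (Fin (n + 1)) ℝ := by
  refine Submonoid.list_prod_mem _ fun M hM => ?_
  obtain ⟨p, hp, rfl⟩ := List.mem_map.1 hM
  have := mem_Icc.1 (fst_mem_Icc_of_mem_luszWord hp)
  exact xA_mem_upperUnitriangular (by omega) _

theorem initialMinor_self_of_mem_upperUnitriangular {n : ℕ}
    {M : Matrix (Fin (n + 1)) (Fin (n + 1)) ℝ} (hM : M ∈ upperUnitriangular (Fin (n + 1)) ℝ)
    {a : ℕ} (ha : a ≤ n + 1) :
    initialMinor n M a a = 1 := by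
  have hmono : StrictMono fun r : Fin a => ((r : ℕ) : Fin (n + 1)) := fun r c h => by
    rw [Fin.lt_def, Fin.val_cast_of_lt (by omega), Fin.val_cast_of_lt (by omega)]
    exact h
  rw [initialMinor, det_of_isUpperTriangular]
  · simp [hM.2]
  · intro r c (h : c < r)
    simpa using hM.1 (hmono h)

theorem luszWord_succ (m : ℕ) :
    luszWord (m + 1) = (List.range (m + 1)).reverse.map (fun t => (t + 1, t + 1)) ++
      (luszWord m).map fun p => (p.1 + 1, p.2) := by
  rw [luszWord, luszWord]
  conv_lhs => rw [List.range_succ_eq_map, List.flatMap_cons, List.flatMap_map]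
  rw [List.map_flatMap]
  congr 1
  · rw [Nat.sub_zero, List.range_eq_range', List.reverse_range', List.map_map,
      ← List.range_eq_range']
    refine List.map_congr_left fun t ht => ?_
    simp only [List.mem_range] at ht
    simp only [Function.comp_apply, Prod.mk.injEq]
    omega
  · refine List.flatMap_congr fun j hj => ?_
    rw [List.map_map, Nat.succ_sub_succ]
    refine List.map_congr_left fun t ht => ?_
    simp only [List.mem_range] at ht
    simp only [Function.comp_apply, Prod.mk.injEq]
    omega

theorem prod_xA_reverse_range {n b : ℕ} (hb : b ≤ n + 1) (a : ℕ → ℝ) :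
    ((List.range b).reverse.map fun t => xA (n + 1) t (a t)).prod =
      1 + ∑ t ∈ range b,
        Matrix.single (t : Fin (n + 2)) ((t + 1 : ℕ) : Fin (n + 2)) (a t) := by
  induction b with
  | zero => simp
  | succ b ih =>
    have hcross : Matrix.single (b : Fin (n + 2)) ((b + 1 : ℕ) : Fin (n + 2)) (a b) *
        ∑ t ∈ range b,
          Matrix.single (t : Fin (n + 2)) ((t + 1 : ℕ) : Fin (n + 2)) (a t) = 0 := by
      rw [Finset.mul_sum]
      refine Finset.sum_eq_zero fun t ht => ?_
      refine Matrix.single_mul_single_of_ne _ _ _ _ (fun h => ?_) _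
      rw [mem_range] at ht
      rw [Fin.ext_iff, Fin.val_cast_of_lt (by omega), Fin.val_cast_of_lt (by omega)] at h
      omega
    rw [List.range_succ, List.reverse_append, List.map_append, List.prod_append, ih (by omega),
      Finset.sum_range_succ]
    simp only [List.reverse_singleton, List.map_cons, List.map_nil, List.prod_cons,
      List.prod_nil, mul_one, xA]
    rw [add_mul, one_mul, mul_add, mul_one, hcross]
    abel

theorem MA_succ (m : ℕ) (v : ℕ → ℕ → ℝ) :
    MA (m + 1) v = upperBidiagonal m (fun t => v (t + 1) (t + 1)) *
      cornerEmbed ℝ m (MA m fun i k => v (i + 1) k) := by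
  rw [MA, luszWord_succ, List.map_append, List.prod_append, List.map_map, List.map_map]
  congr 1
  · exact prod_xA_reverse_range le_rfl _
  · rw [MA, map_list_prod, List.map_map]
    refine congrArg List.prod (List.map_congr_left fun p hp => ?_)
    have := mem_Icc.1 (fst_mem_Icc_of_mem_luszWord hp)
    simp only [Function.comp_apply]
    rw [cornerEmbed_xA (by omega)]
    congr 1
    omega

theorem initialMinor_upperBidiagonal_mul_cornerEmbed {m i j : ℕ} (hij : i + j ≤ m + 1)
    (a : ℕ → ℝ) (B : Matrix (Fin (m + 1)) (Fin (m + 1)) ℝ) :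
    initialMinor (m + 1) (upperBidiagonal m a * cornerEmbed ℝ m B) i (i + (j + 1)) =
      (∏ r ∈ range i, a r) * initialMinor m B i (i + j) := by
  set B' : Matrix (Fin i) (Fin i) ℝ :=
    of fun u c => B ((u : ℕ) : Fin (m + 1)) ((i + j - i + c : ℕ) : Fin (m + 1))
  have hfactor : (of fun r c : Fin i => (upperBidiagonal m a * cornerEmbed ℝ m B)
      ((r : ℕ) : Fin (m + 2)) ((i + (j + 1) - i + c : ℕ) : Fin (m + 2))) =
      lowerBidiagonal a i * B' := by
    ext r c
    have hcol : ((i + (j + 1) - i + c : ℕ) : Fin (m + 2)) =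
        ((i + j - i + c : ℕ) : Fin (m + 1)).succ := by
      rw [← Fin.natCast_add_one_eq_succ (by omega)]
      congr 1
      omega
    rw [of_apply, upperBidiagonal_mul_apply _ _ (by omega), mul_apply, hcol,
      cornerEmbed_natCast_succ _ (by omega), cornerEmbed_natCast_succ _ (by omega)]
    simp only [B', of_apply]
    rw [sum_lowerBidiagonal_mul a fun u =>
      B (u : Fin (m + 1)) ((i + j - i + c : ℕ) : Fin (m + 1))]
    simp only [add_tsub_cancel_left, Nat.cast_add, Nat.add_eq_zero_iff, one_ne_zero, and_false,
      ↓reduceIte, add_tsub_cancel_right]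
    ring
  rw [initialMinor, hfactor, det_mul, det_lowerBidiagonal, initialMinor]

theorem initialMinor_MA_eq_prod_range {n : ℕ} (v : ℕ → ℕ → ℝ) {i j : ℕ}
    (hij : i + j ≤ n + 1) :
    initialMinor n (MA n v) i (i + j) =
      ∏ m ∈ range j, ∏ k ∈ range i, v (m + k + 1) (k + 1) := by
  induction j generalizing n v with
  | zero =>
    simpa using initialMinor_self_of_mem_upperUnitriangular (MA_mem_upperUnitriangular n v) hij
  | succ j ih =>
    rcases n with _ | m
    · obtain rfl : i = 0 := by omega
      simp [initialMinor]
    · rw [MA_succ, initialMinor_upperBidiagonal_mul_cornerEmbed (by omega), ih _ (by omega),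
        prod_range_succ', mul_comm]
      simp only [zero_add, add_assoc, add_comm 1]

theorem initial_minor_product_formula_general (n : ℕ) (v : ℕ → ℕ → ℝ)
    (i j : ℕ) (hij : i + j ≤ n + 1) :
    initialMinor n (MA n v) i (i + j) =
      ∏ m ∈ Finset.Icc 1 j, ∏ k ∈ Finset.Icc 1 i, v (m + k - 1) k := by
  rw [initialMinor_MA_eq_prod_range v hij]
  simp only [← Finset.Ico_add_one_right_eq_Icc, Finset.prod_Ico_eq_prod_range,
    add_tsub_cancel_right]
  refine prod_congr rfl fun m _ => prod_congr rfl fun k _ => ?_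
  congr 1 <;> omega

/-- The second formula of Proposition 7.1 of the paper:
`X_{i,i+j} = ∏_{m=1}^{j} ∏_{k=1}^{i} x_{m+k−1}^{k}`. -/
theorem initial_minor_product_formula (n : ℕ) (hn : 1 ≤ n) (v : ℕ → ℕ → ℝ)
    (i j : ℕ) (hi : 1 ≤ i) (hj : 1 ≤ j) (hij : i + j ≤ n + 1) :
    initialMinor n (MA n v) i (i + j) =
      ∏ m ∈ Finset.Icc 1 j, ∏ k ∈ Finset.Icc 1 i, v (m + k - 1) k :=
  initial_minor_product_formula_general n v i j hij
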